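/- Let G be a graph with two distinct vertices u, v, and let G' be obtained from G by adding an ear u w_1 w_2 … w_l v of length l+1 with l ≥ 1 (a path of new internal vertices w_1,…,w_l joining u to v). Then for all m ∈ ℕ, P_DP(G',m) ≤ P_DP(G,m)·(m-1)^{l+1}/m. -/

import Mathlib

open SimpleGraph

/-- The number of proper `m`-colorings of a graph `G`. -/
noncomputable def numColorings {V : Type} (G : SimpleGraph V) (m : ℕ) : ℕ :=
  Nat.card {c : V → Fin m // ∀ ⦃a b : V⦄, G.Adj a b → c a ≠ c b}

/-- An `m`-fold cover `(L, H)` of a graph `G`. -/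
structure DPCover {V : Type} (G : SimpleGraph V) (m : ℕ) where
  X : Type
  H : SimpleGraph X
  L : V → Set X
  partition : ∀ x : X, ∃! v : V, x ∈ L v
  fold : ∀ v : V, Nat.card (L v) = m
  cliques : ∀ v : V, ∀ x ∈ L v, ∀ y ∈ L v, x ≠ y → H.Adj x y
  cross : ∀ u v : V, ∀ x ∈ L u, ∀ y ∈ L v, H.Adj x y → u = v ∨ G.Adj u v
  matching : ∀ u v : V, G.Adj u v → ∀ x ∈ L u, ∀ y ∈ L v, ∀ z ∈ L v,
      H.Adj x y → H.Adj x z → y = z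
  matching' : ∀ u v : V, G.Adj u v → ∀ y ∈ L u, ∀ z ∈ L u, ∀ x ∈ L v,
      H.Adj y x → H.Adj z x → y = z

/-- A cover is full if for each edge `uv` of `G` the matching between `L u` and `L v`
is a perfect matching. -/
def DPCover.IsFull {V : Type} {G : SimpleGraph V} {m : ℕ} (C : DPCover G m) : Prop :=
  ∀ u v : V, G.Adj u v → ∀ x ∈ C.L u, ∃ y ∈ C.L v, C.H.Adj x y

/-- An `H`-coloring of `G`, viewed as an independent transversal of the lists. -/
def DPCover.IsColoring {V : Type} {G : SimpleGraph V} {m : ℕ} (C : DPCover G m)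
    (f : V → C.X) : Prop :=
  (∀ v : V, f v ∈ C.L v) ∧ ∀ u v : V, u ≠ v → ¬ C.H.Adj (f u) (f v)

/-- `P_DP(G, 𝓗)`, the number of `𝓗`-colorings of `G`. -/
noncomputable def DPCover.count {V : Type} {G : SimpleGraph V} {m : ℕ}
    (C : DPCover G m) : ℕ :=
  Nat.card {f : V → C.X // C.IsColoring f}

/-- The DP color function `P_DP(G, m)`. -/
noncomputable def PDP {V : Type} (G : SimpleGraph V) (m : ℕ) : ℕ :=
  sInf {n : ℕ | ∃ C : DPCover G m, C.count = n}

/-- The DP-chromatic number `χ_DP(G)`. -/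
noncomputable def chiDP {V : Type} (G : SimpleGraph V) : ℕ :=
  sInf {m : ℕ | ∀ C : DPCover G m, ∃ f : V → C.X, C.IsColoring f}

/-- A canonical labeling of an `m`-fold cover. -/
def DPCover.HasCanonicalLabeling {V : Type} {G : SimpleGraph V} {m : ℕ}
    (C : DPCover G m) : Prop :=
  ∃ φ : V × Fin m → C.X, Function.Bijective φ ∧ (∀ v j, φ (v, j) ∈ C.L v) ∧
    ∀ u v : V, G.Adj u v → ∀ j : Fin m, C.H.Adj (φ (u, j)) (φ (v, j))

/-- A graph is 2-connected if it has at least 3 vertices, is connected, and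
remains connected after deleting any single vertex. -/
def TwoConnected {V : Type} (G : SimpleGraph V) : Prop :=
  3 ≤ Nat.card V ∧ G.Connected ∧ ∀ v : V, (G.induce ({v}ᶜ : Set V)).Connected

/-- The graph obtained from `G` by adding an ear `u w₁ w₂ … w_l v` of length `l + 1`:
the internal vertices are `l` new vertices, modelled by `Fin l`. -/
def addEar {V : Type} (G : SimpleGraph V) (u v : V) (l : ℕ) :
    SimpleGraph (V ⊕ Fin l) :=
  G.map (⟨Sum.inl, Sum.inl_injective⟩ : V ↪ V ⊕ Fin l) ⊔
    SimpleGraph.fromRel (fun a b =>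
      (∃ j : Fin l, (j : ℕ) = 0 ∧ a = Sum.inl u ∧ b = Sum.inr j) ∨
      (∃ i j : Fin l, (i : ℕ) + 1 = (j : ℕ) ∧ a = Sum.inr i ∧ b = Sum.inr j) ∨
      (∃ i : Fin l, (i : ℕ) = l - 1 ∧ a = Sum.inr i ∧ b = Sum.inl v))

/-!
Take an `m`-fold cover of `G` with exactly `P_DP(G, m)` colourings, label the lists of `u` and `v`
injectively by `Fin m`, give every internal ear vertex the list `Fin m`, and match consecutive lists
along the ear by translations of `Fin m`, by `t₁, …, t_{l+1}`. A colouring of this cover of `G'` is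
a colouring of `G` together with labels on the ear, and once these are fixed each edge of the ear
forbids exactly one value of its translation. Summing over the `m ^ (l + 1)` translation vectors
therefore counts `P_DP(G, m) · m ^ l · (m - 1) ^ (l + 1)` colourings, so some vector gives a cover
with at most `P_DP(G, m) (m - 1) ^ (l + 1) / m` of them.
-/

open Sum

namespace DPCover

variable {V : Type} {G : SimpleGraph V} {m : ℕ}

lemma eq_of_mem_L (C : DPCover G m) {x : C.X} {a b : V} (ha : x ∈ C.L a) (hb : x ∈ C.L b) :
    a = b :=
  (C.partition x).unique ha hb

lemma finite_L [NeZero m] (C : DPCover G m) (w : V) : Finite (C.L w) :=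
  Nat.finite_of_card_ne_zero (by rw [C.fold]; exact NeZero.ne m)

lemma finite_X [Finite V] [NeZero m] (C : DPCover G m) : Finite C.X := by
  have hcover : ⋃ w, C.L w = Set.univ :=
    Set.eq_univ_of_forall fun x => Set.mem_iUnion.2 (C.partition x).exists
  have := C.finite_L
  exact Set.finite_univ_iff.1 (hcover ▸ Set.finite_iUnion fun w => Set.toFinite (C.L w))

lemma exists_injOn_L [NeZero m] (C : DPCover G m) (w : V) :
    ∃ e : C.X → Fin m, Set.InjOn e (C.L w) := by
  classical
  have := C.finite_L w
  let e : C.L w ≃ Fin m := (Finite.equivFin _).trans (finCongr (C.fold w))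
  refine ⟨fun x => if h : x ∈ C.L w then e ⟨x, h⟩ else 0, fun x hx y hy hxy => ?_⟩
  simpa [dif_pos hx, dif_pos hy] using hxy

lemma finite_colorings [Finite V] [NeZero m] (C : DPCover G m) :
    Finite {f : V → C.X // C.IsColoring f} := by
  have := C.finite_X
  infer_instance

end DPCover

def SimpleGraph.discreteCover {V : Type} (G : SimpleGraph V) (m : ℕ) : DPCover G m where
  X := V × Fin m
  H := { Adj := fun x y => x.1 = y.1 ∧ x ≠ y
         symm := ⟨fun _ _ h => ⟨h.1.symm, h.2.symm⟩⟩
         loopless := ⟨fun _ h => h.2 rfl⟩ }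
  L w := {x | x.1 = w}
  partition x := ⟨x.1, rfl, fun _ h => h.symm⟩
  fold w := by
    let e : {x : V × Fin m | x.1 = w} ≃ Fin m :=
      { toFun x := x.1.2
        invFun j := ⟨(w, j), rfl⟩
        left_inv := by rintro ⟨⟨a, j⟩, rfl⟩; rfl
        right_inv _ := rfl }
    rw [Nat.card_congr e, Nat.card_fin]
  cliques _ _ hx _ hy hne := ⟨hx.trans hy.symm, hne⟩
  cross _ _ _ hx _ hy h := Or.inl (hx ▸ hy ▸ h.1)
  matching _ _ hab _ hx _ hy _ _ h _ := absurd (hx ▸ hy ▸ h.1) (G.ne_of_adj hab)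
  matching' _ _ hab _ hy _ _ _ hx h _ := absurd (hy ▸ hx ▸ h.1) (G.ne_of_adj hab)

section PDP

variable {V : Type}

lemma PDP_le_count {G : SimpleGraph V} {m : ℕ} (C : DPCover G m) : PDP G m ≤ C.count :=
  Nat.sInf_le ⟨C, rfl⟩

lemma exists_count_eq_PDP (G : SimpleGraph V) (m : ℕ) : ∃ C : DPCover G m, C.count = PDP G m :=
  Nat.sInf_mem (s := {n | ∃ C : DPCover G m, C.count = n}) ⟨_, G.discreteCover m, rfl⟩

lemma PDP_zero [Nonempty V] (G : SimpleGraph V) : PDP G 0 = 0 := by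
  have : IsEmpty {f : V → (G.discreteCover 0).X // (G.discreteCover 0).IsColoring f} :=
    ⟨fun f => (f.1 (Classical.arbitrary V) : V × Fin 0).2.elim0⟩
  exact Nat.eq_zero_of_le_zero ((PDP_le_count (G.discreteCover 0)).trans_eq Nat.card_of_isEmpty)

end PDP

lemma Nat.card_subtype_ne_add {A : Type*} [AddGroup A] [Finite A] (a b : A) :
    Nat.card {s : A // b ≠ a + s} = Nat.card A - 1 := by
  classical
  have := Fintype.ofFinite A
  have hiff : ∀ s : A, b ≠ a + s ↔ ¬ s = -a + b := fun s => by
    rw [eq_neg_add_iff_add_eq, ne_comm]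
  simp_rw [hiff, Nat.card_eq_fintype_card, Fintype.card_subtype_compl, Fintype.card_subtype_eq]

lemma Nat.card_subtype_forall_ne_add {ι A : Type*} [Fintype ι] [AddGroup A] [Finite A]
    (a b : ι → A) :
    Nat.card {t : ι → A // ∀ i, b i ≠ a i + t i} = (Nat.card A - 1) ^ Fintype.card ι := by
  rw [Nat.card_congr (Equiv.subtypePiEquivPi (p := fun i s => b i ≠ a i + s)), Nat.card_pi]
  simp_rw [Nat.card_subtype_ne_add, Finset.prod_const, Finset.card_univ]

lemma Nat.sum_card_subtype_of_card_subtype_eq {P Q : Type*} [Finite P] [Fintype Q]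
    (R : P → Q → Prop) {k : ℕ} (h : ∀ p, Nat.card {q // R p q} = k) :
    ∑ q, Nat.card {p // R p q} = Nat.card P * k := by
  have := Fintype.ofFinite P
  calc ∑ q, Nat.card {p // R p q}
      = Nat.card (Σ q, {p // R p q}) := Nat.card_sigma.symm
    _ = Nat.card (Σ p, {q // R p q}) :=
        Nat.card_congr ((Equiv.subtypeProdEquivSigmaSubtype fun q p => R p q).symm.trans
          ((Equiv.prodComm Q P).subtypeEquiv fun _ => Iff.rfl) |>.trans
          (Equiv.subtypeProdEquivSigmaSubtype R))
    _ = Nat.card P * k := by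
        rw [Nat.card_sigma, Finset.sum_congr rfl fun p _ => h p, Finset.sum_const,
          Finset.card_univ, Nat.card_eq_fintype_card, smul_eq_mul]

lemma Fintype.exists_card_mul_le_sum {Q : Type*} [Fintype Q] [Nonempty Q] (f : Q → ℕ) :
    ∃ q, Fintype.card Q * f q ≤ ∑ q, f q := by
  obtain ⟨q, -, hq⟩ := Finset.exists_min_image Finset.univ f Finset.univ_nonempty
  exact ⟨q, Finset.card_univ (α := Q) ▸
    Finset.card_nsmul_le_sum _ _ _ fun q' _ => hq q' (Finset.mem_univ _)⟩

section AddEar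

variable {V : Type} {G : SimpleGraph V} {u v : V} {l : ℕ}

lemma addEar_adj_inl_iff {a b : V} : (addEar G u v l).Adj (inl a) (inl b) ↔ G.Adj a b := by
  simpa [addEar] using SimpleGraph.map_adj_apply (G := G) (f := ⟨inl, inl_injective⟩)

lemma addEar_adj_first (i : Fin l) (hi : (i : ℕ) = 0) : (addEar G u v l).Adj (inl u) (inr i) :=
  Or.inr ((SimpleGraph.fromRel_adj _ _ _).2 ⟨by simp, Or.inl (Or.inl ⟨i, hi, rfl, rfl⟩)⟩)

lemma addEar_adj_last (i : Fin l) (hi : (i : ℕ) = l - 1) :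
    (addEar G u v l).Adj (inr i) (inl v) :=
  Or.inr ((SimpleGraph.fromRel_adj _ _ _).2 ⟨by simp, Or.inl (Or.inr (Or.inr ⟨i, hi, rfl, rfl⟩))⟩)

lemma addEar_adj_succ {i i' : Fin l} (h : (i : ℕ) + 1 = i') :
    (addEar G u v l).Adj (inr i) (inr i') :=
  Or.inr ((SimpleGraph.fromRel_adj _ _ _).2
    ⟨fun he => by cases he; omega, Or.inl (Or.inr (Or.inl ⟨i, i', h, rfl, rfl⟩))⟩)

end AddEar

/-- Injective labellings of the lists of the ends of the ear, through which the new matchings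
are attached. -/
structure EarLabeling {V : Type} {G : SimpleGraph V} {m : ℕ} (C : DPCover G m) (u v : V) where
  labelU : C.X → Fin m
  labelV : C.X → Fin m
  injOn_labelU : Set.InjOn labelU (C.L u)
  injOn_labelV : Set.InjOn labelV (C.L v)

lemma DPCover.nonempty_earLabeling {V : Type} {G : SimpleGraph V} {m : ℕ} [NeZero m]
    (C : DPCover G m) (u v : V) : Nonempty (EarLabeling C u v) := by
  obtain ⟨eu, hu⟩ := C.exists_injOn_L u
  obtain ⟨ev, hv⟩ := C.exists_injOn_L v
  exact ⟨⟨eu, ev, hu, hv⟩⟩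

namespace EarLabeling

variable {V : Type} {G : SimpleGraph V} {u v : V} {n m : ℕ} {C : DPCover G m}
  (E : EarLabeling C u v) (t : Fin (n + 1) → Fin m) (s : Fin m)

/-- The new list of the ear vertex `inr i` consists of the elements `inr (i, j)`, labelled by `j`.
Along the ear `u, inr 0, …, inr (Fin.last n), v` each list is matched to the next one by
translating labels: by `t i` into the list of `inr i`, and by `s` into the list of `v`. -/
def EndAdj (x : C.X) (p : Fin (n + 1) × Fin m) : Prop :=
  (p.1 = 0 ∧ x ∈ C.L u ∧ p.2 = E.labelU x + t 0) ∨
    (p.1 = Fin.last n ∧ x ∈ C.L v ∧ E.labelV x = p.2 + s)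

def Step (p q : Fin (n + 1) × Fin m) : Prop :=
  (p.1 : ℕ) + 1 = q.1 ∧ q.2 = p.2 + t q.1

def Adj : C.X ⊕ Fin (n + 1) × Fin m → C.X ⊕ Fin (n + 1) × Fin m → Prop
  | inl x, inl y => C.H.Adj x y
  | inl x, inr p => E.EndAdj t s x p
  | inr p, inl x => E.EndAdj t s x p
  | inr p, inr q => (p.1 = q.1 ∧ p.2 ≠ q.2) ∨ Step t p q ∨ Step t q p

def graph : SimpleGraph (C.X ⊕ Fin (n + 1) × Fin m) where
  Adj := E.Adj t s
  symm := ⟨by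
    rintro (x | p) (y | q) h
    · exact h.symm
    · exact h
    · exact h
    · rcases h with ⟨h1, h2⟩ | h | h
      exacts [Or.inl ⟨h1.symm, h2.symm⟩, Or.inr (Or.inr h), Or.inr (Or.inl h)]⟩
  loopless := ⟨by
    rintro (x | p) h
    · exact C.H.loopless.irrefl x h
    · rcases h with ⟨-, h⟩ | ⟨h, -⟩ | ⟨h, -⟩
      · exact h rfl
      all_goals omega⟩

variable (C) in
def list : V ⊕ Fin (n + 1) → Set (C.X ⊕ Fin (n + 1) × Fin m) :=
  Sum.elim (fun a => inl '' C.L a) (fun i => Set.range fun j => inr (i, j))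

lemma inl_mem_list_inl {a : V} {x : C.X} : inl x ∈ list (n := n) C (inl a) ↔ x ∈ C.L a := by
  simp [list]

lemma inr_mem_list_inr {i : Fin (n + 1)} {p : Fin (n + 1) × Fin m} :
    inr p ∈ list C (inr i) ↔ p.1 = i := by
  simp [list, Prod.ext_iff, eq_comm]

lemma list_partition (x : C.X ⊕ Fin (n + 1) × Fin m) : ∃! w, x ∈ list C w := by
  rcases x with x | p
  · obtain ⟨a, ha, huniq⟩ := C.partition x
    refine ⟨inl a, inl_mem_list_inl.2 ha, ?_⟩
    rintro (b | i) hb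
    · exact congrArg inl (huniq b (inl_mem_list_inl.1 hb))
    · simp [list] at hb
  · refine ⟨inr p.1, inr_mem_list_inr.2 rfl, ?_⟩
    rintro (b | i) hb
    · simp [list] at hb
    · exact congrArg inr (inr_mem_list_inr.1 hb).symm

lemma card_list (w : V ⊕ Fin (n + 1)) : Nat.card (list C w) = m := by
  rcases w with a | i
  · exact (Nat.card_image_of_injective inl_injective _).trans (C.fold a)
  · exact (Nat.card_range_of_injective fun j j' h => by simpa using h).trans (Nat.card_fin m)

lemma graph_adj_of_mem_list (w : V ⊕ Fin (n + 1)) (x) (hx : x ∈ list C w)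
    (y) (hy : y ∈ list C w) (hne : x ≠ y) : (E.graph t s).Adj x y := by
  rcases w with a | i
  · obtain ⟨x, hx, rfl⟩ := hx
    obtain ⟨y, hy, rfl⟩ := hy
    exact C.cliques a x hx y hy fun h => hne (h ▸ rfl)
  · obtain ⟨j, rfl⟩ := hx
    obtain ⟨j', rfl⟩ := hy
    exact Or.inl ⟨rfl, fun (h : j = j') => hne (h ▸ rfl)⟩

lemma addEar_adj_of_endAdj {a : V} {x : C.X} (hx : x ∈ C.L a) {p : Fin (n + 1) × Fin m}
    (h : E.EndAdj t s x p) : (addEar G u v (n + 1)).Adj (inl a) (inr p.1) := by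
  rcases h with ⟨h, hu, -⟩ | ⟨h, hv, -⟩
  · rw [C.eq_of_mem_L hx hu, h]
    exact addEar_adj_first _ rfl
  · rw [C.eq_of_mem_L hx hv, h]
    exact (addEar_adj_last _ (by simp)).symm

lemma graph_cross (a b : V ⊕ Fin (n + 1)) (x) (hx : x ∈ list C a) (y) (hy : y ∈ list C b)
    (h : (E.graph t s).Adj x y) : a = b ∨ (addEar G u v (n + 1)).Adj a b := by
  rcases a with a | i <;> rcases b with b | i'
  · obtain ⟨x, hx, rfl⟩ := hx
    obtain ⟨y, hy, rfl⟩ := hy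
    exact (C.cross a b x hx y hy h).imp (congrArg inl) addEar_adj_inl_iff.2
  · obtain ⟨x, hx, rfl⟩ := hx
    obtain ⟨j, rfl⟩ := hy
    exact Or.inr (E.addEar_adj_of_endAdj t s hx h)
  · obtain ⟨j, rfl⟩ := hx
    obtain ⟨y, hy, rfl⟩ := hy
    exact Or.inr (E.addEar_adj_of_endAdj t s hy h).symm
  · obtain ⟨j, rfl⟩ := hx
    obtain ⟨j', rfl⟩ := hy
    rcases h with ⟨h, -⟩ | ⟨h, -⟩ | ⟨h, -⟩
    · exact Or.inl (congrArg inr h)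
    · exact Or.inr (addEar_adj_succ h)
    · exact Or.inr (addEar_adj_succ h).symm

variable {E t s}

lemma endAdj_right_unique (huv : u ≠ v) {x : C.X} {i : Fin (n + 1)} {j j' : Fin m}
    (h : E.EndAdj t s x (i, j)) (h' : E.EndAdj t s x (i, j')) : j = j' := by
  rcases h with ⟨-, hu, rfl⟩ | ⟨-, hv, h⟩ <;> rcases h' with ⟨-, hu', rfl⟩ | ⟨-, hv', h'⟩
  · rfl
  · exact absurd (C.eq_of_mem_L hu hv') huv
  · exact absurd (C.eq_of_mem_L hu' hv) huv
  · exact add_right_cancel (h.symm.trans h')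

lemma endAdj_left_unique (huv : u ≠ v) {x y : C.X} {a : V} (hx : x ∈ C.L a) (hy : y ∈ C.L a)
    {p : Fin (n + 1) × Fin m} (h : E.EndAdj t s x p) (h' : E.EndAdj t s y p) : x = y := by
  rcases h with ⟨-, hu, h⟩ | ⟨-, hv, h⟩ <;> rcases h' with ⟨-, hu', h'⟩ | ⟨-, hv', h'⟩
  · exact E.injOn_labelU hu hu' (add_right_cancel (h.symm.trans h'))
  · exact absurd ((C.eq_of_mem_L hu hx).trans (C.eq_of_mem_L hy hv')) huv
  · exact absurd ((C.eq_of_mem_L hu' hy).trans (C.eq_of_mem_L hx hv)) huv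
  · exact E.injOn_labelV hv hv' (h.trans h'.symm)

lemma step_unique {p q q' : Fin (n + 1) × Fin m} (hq : q.1 = q'.1)
    (h : Step t p q ∨ Step t q p) (h' : Step t p q' ∨ Step t q' p) : q = q' := by
  have hq' := congrArg Fin.val hq
  refine Prod.ext hq ?_
  rcases h with ⟨h1, h2⟩ | ⟨h1, h2⟩ <;> rcases h' with ⟨h1', h2'⟩ | ⟨h1', h2'⟩
  · rw [h2, h2', hq]
  · omega
  · omega
  · exact add_right_cancel (h2.symm.trans h2')

variable (E t s)

lemma graph_matching (huv : u ≠ v) (a b : V ⊕ Fin (n + 1))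
    (hab : (addEar G u v (n + 1)).Adj a b) (x) (hx : x ∈ list C a) (y) (hy : y ∈ list C b)
    (z) (hz : z ∈ list C b) (hxy : (E.graph t s).Adj x y) (hxz : (E.graph t s).Adj x z) :
    y = z := by
  rcases a with a | i <;> rcases b with b | i'
  · obtain ⟨x, hx, rfl⟩ := hx
    obtain ⟨y, hy, rfl⟩ := hy
    obtain ⟨z, hz, rfl⟩ := hz
    exact congrArg inl (C.matching a b (addEar_adj_inl_iff.1 hab) x hx y hy z hz hxy hxz)
  · obtain ⟨x, hx, rfl⟩ := hx
    obtain ⟨j, rfl⟩ := hy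
    obtain ⟨j', rfl⟩ := hz
    rw [endAdj_right_unique huv hxy hxz]
  · obtain ⟨j, rfl⟩ := hx
    obtain ⟨y, hy, rfl⟩ := hy
    obtain ⟨z, hz, rfl⟩ := hz
    rw [endAdj_left_unique huv hy hz hxy hxz]
  · obtain ⟨j, rfl⟩ := hx
    obtain ⟨j1, rfl⟩ := hy
    obtain ⟨j2, rfl⟩ := hz
    have hne : i ≠ i' := fun h => hab.ne (congrArg inr h)
    exact congrArg inr (step_unique rfl (hxy.resolve_left fun h => hne h.1)
      (hxz.resolve_left fun h => hne h.1))

def cover (huv : u ≠ v) : DPCover (addEar G u v (n + 1)) m where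
  X := C.X ⊕ Fin (n + 1) × Fin m
  H := E.graph t s
  L := list C
  partition := list_partition
  fold := card_list
  cliques := E.graph_adj_of_mem_list t s
  cross := E.graph_cross t s
  matching := E.graph_matching t s huv
  matching' a b hab y hy z hz x hx hyx hzx :=
    E.graph_matching t s huv b a hab.symm x hx y hy z hz hyx.symm hzx.symm

variable {t s}

def extend (f : V → C.X) (c : Fin (n + 1) → Fin m) :
    V ⊕ Fin (n + 1) → C.X ⊕ Fin (n + 1) × Fin m :=
  Sum.elim (inl ∘ f) fun i => inr (i, c i)

/-- The label of the predecessor of `inr i` on the ear, when `u` carries the label `a`. -/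
def predLabel (a : Fin m) (c : Fin (n + 1) → Fin m) (i : Fin (n + 1)) : Fin m :=
  Fin.cases a (fun k : Fin n => c k.castSucc) i

variable (t s) in
def Fits (f : V → C.X) (c : Fin (n + 1) → Fin m) : Prop :=
  (∀ i, c i ≠ predLabel (E.labelU (f u)) c i + t i) ∧ E.labelV (f v) ≠ c (Fin.last n) + s

lemma not_endAdj_of_fits {f : V → C.X} {c : Fin (n + 1) → Fin m} (hf : ∀ a, f a ∈ C.L a)
    (hfits : E.Fits t s f c) (a : V) (i : Fin (n + 1)) : ¬ E.EndAdj t s (f a) (i, c i) := by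
  rintro (⟨rfl, hu, h⟩ | ⟨rfl, hv, h⟩)
  · rw [C.eq_of_mem_L (hf a) hu] at h
    exact hfits.1 0 h
  · rw [C.eq_of_mem_L (hf a) hv] at h
    exact hfits.2 h

lemma not_step_of_fits {f : V → C.X} {c : Fin (n + 1) → Fin m} (hfits : E.Fits t s f c)
    (i i' : Fin (n + 1)) : ¬ Step t (i, c i) (i', c i') := by
  rintro ⟨hsucc, h⟩
  induction i' using Fin.cases with
  | zero => simp at hsucc
  | succ k =>
    obtain rfl : i = k.castSucc := Fin.ext (by simp at hsucc ⊢; omega)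
    exact hfits.1 k.succ h

lemma isColoring_extend_iff (huv : u ≠ v) (f : V → C.X) (c : Fin (n + 1) → Fin m) :
    (E.cover t s huv).IsColoring (extend f c) ↔ C.IsColoring f ∧ E.Fits t s f c := by
  constructor
  · rintro ⟨hmem, hind⟩
    have hf (a : V) : f a ∈ C.L a := inl_mem_list_inl.1 (hmem (inl a))
    refine ⟨⟨hf, fun a b hab => hind (inl a) (inl b) (by simpa using hab)⟩, fun i h => ?_,
      fun h => hind (inl v) (inr (Fin.last n)) inl_ne_inr (Or.inr ⟨rfl, hf v, h⟩)⟩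
    induction i using Fin.cases with
    | zero => exact hind (inl u) (inr 0) inl_ne_inr (Or.inl ⟨rfl, hf u, h⟩)
    | succ k =>
      exact hind (inr k.castSucc) (inr k.succ) (by simp [Fin.ext_iff])
        (Or.inr (Or.inl ⟨by simp, h⟩))
  · rintro ⟨⟨hf, hind⟩, hfits⟩
    refine ⟨?_, ?_⟩
    · rintro (a | i)
      exacts [inl_mem_list_inl.2 (hf a), inr_mem_list_inr.2 rfl]
    · rintro (a | i) (b | i') hne hadj
      · exact hind a b (fun h => hne (congrArg inl h)) hadj
      · exact E.not_endAdj_of_fits hf hfits a i' hadj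
      · exact E.not_endAdj_of_fits hf hfits b i hadj
      · rcases hadj with ⟨h, -⟩ | h | h
        · exact hne (congrArg inr h)
        · exact E.not_step_of_fits hfits i i' h
        · exact E.not_step_of_fits hfits i' i h

lemma extend_injective :
    Function.Injective fun p : (V → C.X) × (Fin (n + 1) → Fin m) => extend p.1 p.2 := by
  rintro ⟨f, c⟩ ⟨f', c'⟩ h
  exact Prod.ext (funext fun a => by simpa [extend] using congrFun h (inl a))
    (funext fun i => by simpa [extend] using congrFun h (inr i))

lemma exists_extend_eq {g : V ⊕ Fin (n + 1) → C.X ⊕ Fin (n + 1) × Fin m}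
    (hg : ∀ w, g w ∈ list C w) : ∃ f c, g = extend f c := by
  have hf (a : V) : ∃ x, g (inl a) = inl x := by
    obtain ⟨x, -, hx⟩ := hg (inl a)
    exact ⟨x, hx.symm⟩
  have hc (i : Fin (n + 1)) : ∃ j, g (inr i) = inr (i, j) := by
    obtain ⟨j, hj⟩ := hg (inr i)
    exact ⟨j, hj.symm⟩
  choose f hf using hf
  choose c hc using hc
  exact ⟨f, c, funext fun w => w.casesOn hf hc⟩

lemma count_cover (huv : u ≠ v) : (E.cover t s huv).count =
    Nat.card {p : {f // C.IsColoring f} × (Fin (n + 1) → Fin m) // E.Fits t s p.1.1 p.2} := by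
  refine (Nat.card_congr (Equiv.ofBijective
    (fun p => ⟨extend p.1.1.1 p.1.2, (E.isColoring_extend_iff huv _ _).2 ⟨p.1.1.2, p.2⟩⟩)
    ⟨fun p p' h => ?_, fun g => ?_⟩)).symm
  · have : ((p.1.1.1, p.1.2) : (V → C.X) × _) = (p'.1.1.1, p'.1.2) :=
      extend_injective (congrArg Subtype.val h)
    simp only [Prod.mk.injEq] at this
    exact Subtype.ext (Prod.ext (Subtype.ext this.1) this.2)
  · obtain ⟨f, c, hg⟩ := exists_extend_eq g.2.1
    obtain ⟨hf, hfits⟩ := (E.isColoring_extend_iff huv f c).1 (hg ▸ g.2)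
    exact ⟨⟨(⟨f, hf⟩, c), hfits⟩, Subtype.ext hg.symm⟩

variable (t s) in
lemma card_shifts_fits (f : V → C.X) (c : Fin (n + 1) → Fin m) [NeZero m] :
    Nat.card {q : (Fin (n + 1) → Fin m) × Fin m // E.Fits q.1 q.2 f c} = (m - 1) ^ (n + 2) := by
  unfold Fits
  rw [Nat.card_congr (Equiv.subtypeProdEquivProd
      (p := fun t : Fin (n + 1) → Fin m => ∀ i, c i ≠ predLabel (E.labelU (f u)) c i + t i)
      (q := fun s => E.labelV (f v) ≠ c (Fin.last n) + s)), Nat.card_prod,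
    Nat.card_subtype_forall_ne_add, Nat.card_subtype_ne_add, Nat.card_fin, Fintype.card_fin,
    ← pow_succ]

lemma sum_count_cover [Finite V] [NeZero m] (huv : u ≠ v) :
    ∑ q : (Fin (n + 1) → Fin m) × Fin m, (E.cover q.1 q.2 huv).count =
      C.count * m ^ (n + 1) * (m - 1) ^ (n + 2) := by
  have := C.finite_colorings
  simp_rw [count_cover]
  refine (Nat.sum_card_subtype_of_card_subtype_eq
      (fun (p : {f // C.IsColoring f} × (Fin (n + 1) → Fin m))
        (q : (Fin (n + 1) → Fin m) × Fin m) => E.Fits q.1 q.2 p.1.1 p.2)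
      fun p => E.card_shifts_fits p.1.1 p.2).trans ?_
  rw [Nat.card_prod, Nat.card_fun, Nat.card_fin, Nat.card_fin, DPCover.count]

end EarLabeling

lemma mul_PDP_addEar_le {V : Type} [Finite V] (G : SimpleGraph V) {u v : V} (huv : u ≠ v)
    (n m : ℕ) [NeZero m] :
    m * PDP (addEar G u v (n + 1)) m ≤ PDP G m * (m - 1) ^ (n + 2) := by
  obtain ⟨C, hC⟩ := exists_count_eq_PDP G m
  obtain ⟨E⟩ := C.nonempty_earLabeling u v
  obtain ⟨q, hq⟩ := Fintype.exists_card_mul_le_sum fun q : (Fin (n + 1) → Fin m) × Fin m =>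
    (E.cover q.1 q.2 huv).count
  rw [E.sum_count_cover huv, hC, Fintype.card_prod, Fintype.card_fun, Fintype.card_fin,
    Fintype.card_fin] at hq
  refine le_trans (Nat.mul_le_mul_left m (PDP_le_count (E.cover q.1 q.2 huv))) ?_
  refine Nat.le_of_mul_le_mul_left (c := m ^ (n + 1)) ?_ (pow_pos (NeZero.pos m) _)
  linarith

theorem stmt_13 {V : Type} [Fintype V] (G : SimpleGraph V) (u v : V) (huv : u ≠ v)
    (l : ℕ) (hl : 1 ≤ l) (m : ℕ) :
    (PDP (addEar G u v l) m : ℚ) ≤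
      (PDP G m : ℚ) * ((m : ℚ) - 1) ^ (l + 1) / (m : ℚ) := by
  obtain ⟨n, rfl⟩ := Nat.exists_eq_add_of_le' hl
  rcases Nat.eq_zero_or_pos m with rfl | hm
  · simp [PDP_zero]
  have : NeZero m := ⟨hm.ne'⟩
  have key : ((m * PDP (addEar G u v (n + 1)) m : ℕ) : ℚ) ≤
      (PDP G m * (m - 1) ^ (n + 2) : ℕ) :=
    Nat.cast_le.2 (mul_PDP_addEar_le G huv n m)
  rw [le_div_iff₀ (Nat.cast_pos.2 hm)]
  push_cast [Nat.cast_sub hm] at key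
  linarith
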